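/- If the bidual SDP (8) has a solution and rank(A) = m < n, then its solution set contains a matrix of rank at least n − m. More precisely, from any optimal X* one can repeatedly add rank-one matrices wwᵀ with w ∈ W₀ orthogonal to the range of the current solution, strictly increasing the rank at each step, until reaching an optimal solution of rank ≥ n − m. -/

import Mathlib

/-- Index type for ℝ^{2n+1}, split into blocks (z₀, z, x). -/
abbrev Idx (n : ℕ) := Fin 1 ⊕ (Fin n ⊕ Fin n)

/-- The objective matrix Q: (z₀,z)-block ½eᵀ, symmetric, zeros elsewhere. -/
noncomputable def Qmat (n : ℕ) : Matrix (Idx n) (Idx n) ℝ := fun p q =>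
  match p, q with
  | Sum.inl _, Sum.inr (Sum.inl _) => 1 / 2
  | Sum.inr (Sum.inl _), Sum.inl _ => 1 / 2
  | _, _ => 0

/-- The constraint matrix A_j: (z₀,x)-block ½a_jᵀ, symmetric. -/
noncomputable def Amat {m n : ℕ} (A : Matrix (Fin m) (Fin n) ℝ) (j : Fin m) :
    Matrix (Idx n) (Idx n) ℝ := fun p q =>
  match p, q with
  | Sum.inl _, Sum.inr (Sum.inr i) => A j i / 2
  | Sum.inr (Sum.inr i), Sum.inl _ => A j i / 2
  | _, _ => 0

/-- E₀ = diag(1,0,…,0). -/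
noncomputable def E0mat (n : ℕ) : Matrix (Idx n) (Idx n) ℝ := fun p q =>
  match p, q with
  | Sum.inl _, Sum.inl _ => 1
  | _, _ => 0

/-- E_i: (z₀,z)-entries −e_i (symmetric) and z-block 2·diag(e_i). -/
noncomputable def Emat (n : ℕ) (i : Fin n) : Matrix (Idx n) (Idx n) ℝ := fun p q =>
  match p, q with
  | Sum.inl _, Sum.inr (Sum.inl j) => if j = i then -1 else 0
  | Sum.inr (Sum.inl j), Sum.inl _ => if j = i then -1 else 0
  | Sum.inr (Sum.inl j), Sum.inr (Sum.inl j') => if j = i ∧ j' = i then 2 else 0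
  | _, _ => 0

/-- C_i: (z,x)-block diag(e_i), symmetric. -/
noncomputable def Cmat (n : ℕ) (i : Fin n) : Matrix (Idx n) (Idx n) ℝ := fun p q =>
  match p, q with
  | Sum.inr (Sum.inl j), Sum.inr (Sum.inr j') => if j = i ∧ j' = i then 1 else 0
  | Sum.inr (Sum.inr j), Sum.inr (Sum.inl j') => if j = i ∧ j' = i then 1 else 0
  | _, _ => 0

/-- Feasibility for the bidual SDP (8). -/
def BidualFeasible {m n : ℕ} (A : Matrix (Fin m) (Fin n) ℝ) (y : Fin m → ℝ)
    (X : Matrix (Idx n) (Idx n) ℝ) : Prop :=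
  X.PosSemidef ∧ (∀ j, (Amat A j * X).trace = y j) ∧ (E0mat n * X).trace = 1 ∧
    ∀ i, (Emat n i * X).trace = 0 ∧ (Cmat n i * X).trace = 0

/-- Optimality for the bidual SDP (8). -/
def BidualOptimal {m n : ℕ} (A : Matrix (Fin m) (Fin n) ℝ) (y : Fin m → ℝ)
    (X : Matrix (Idx n) (Idx n) ℝ) : Prop :=
  BidualFeasible A y X ∧
    ∀ Y, BidualFeasible A y Y → (Qmat n * Y).trace ≤ (Qmat n * X).trace

/-- Membership in W₀: the z₀ and z coordinates vanish and the x coordinates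
lie in ker A. -/
def memW0 {m n : ℕ} (A : Matrix (Fin m) (Fin n) ℝ) (w : Idx n → ℝ) : Prop :=
  w (Sum.inl 0) = 0 ∧ (∀ i : Fin n, w (Sum.inr (Sum.inl i)) = 0) ∧
    A.mulVec (fun j => w (Sum.inr (Sum.inr j))) = 0


/-!
None of the matrices `Q, Aⱼ, E₀, Eᵢ, Cᵢ` of the bidual SDP has an entry in the `(x, x)` block, so
for `w ∈ W₀` (which is supported on the `x` coordinates) all their traces against `w wᵀ` vanish:
adding `w wᵀ` to an optimal `X` keeps it feasible with the same objective value, hence optimal.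
Doing this for a basis `w₁, …, w_{n-m}` of `ker A` adds the positive semidefinite matrix
`G = ∑ wᵢ wᵢᵀ` of rank `n - m`, and `rank (X + G) ≥ rank G` because `ker (X + G) ⊆ ker G` for
positive semidefinite `X` and `G`.
-/

open Matrix Module

theorem Matrix.rank_le_rank_of_ker_mulVecLin_le {K n : Type*} [Field K] [Fintype n]
    {M N : Matrix n n K} (h : LinearMap.ker M.mulVecLin ≤ LinearMap.ker N.mulVecLin) :
    N.rank ≤ M.rank := by
  have hM := LinearMap.finrank_range_add_finrank_ker M.mulVecLin
  have hN := LinearMap.finrank_range_add_finrank_ker N.mulVecLin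
  have hker := Submodule.finrank_mono h
  unfold Matrix.rank
  omega

open scoped ComplexOrder in
theorem Matrix.PosSemidef.rank_le_rank_add {𝕜 n : Type*} [RCLike 𝕜] [Fintype n]
    {P G : Matrix n n 𝕜} (hP : P.PosSemidef) (hG : G.PosSemidef) :
    G.rank ≤ (P + G).rank := by
  refine rank_le_rank_of_ker_mulVecLin_le fun x hx => ?_
  rw [LinearMap.mem_ker, mulVecLin_apply] at hx ⊢
  have hsum : star x ⬝ᵥ P *ᵥ x + star x ⬝ᵥ G *ᵥ x = 0 := by
    rw [← dotProduct_add, ← add_mulVec, hx, dotProduct_zero]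
  have hPx := hP.dotProduct_mulVec_nonneg x
  have hGx := hG.dotProduct_mulVec_nonneg x
  exact (hG.dotProduct_mulVec_zero_iff x).mp (le_antisymm (by
    calc star x ⬝ᵥ G *ᵥ x ≤ star x ⬝ᵥ P *ᵥ x + star x ⬝ᵥ G *ᵥ x := le_add_of_nonneg_left hPx
      _ = 0 := hsum) hGx)

theorem Matrix.posSemidef_vecMulVec_self {n : Type*} [Fintype n] (w : n → ℝ) :
    (vecMulVec w w).PosSemidef := by
  simpa using posSemidef_vecMulVec_self_star w

theorem Matrix.rank_sum_vecMulVec_self {K ι n : Type*} [Field K] [LinearOrder K]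
    [IsStrictOrderedRing K] [Fintype ι] [Fintype n] {v : ι → n → K} (hv : LinearIndependent K v) :
    (∑ i, vecMulVec (v i) (v i)).rank = Fintype.card ι := by
  have hsum : ∑ i, vecMulVec (v i) (v i) = (of v)ᵀ * of v := by
    ext p q
    simp [mul_apply, vecMulVec_apply, Matrix.sum_apply]
  rw [hsum, rank_transpose_mul_self]
  exact hv.rank_matrix

section BidualSDP

variable {m n : ℕ} {A : Matrix (Fin m) (Fin n) ℝ} {y : Fin m → ℝ}

theorem memW0.dotProduct_mulVec_eq_zero {w : Idx n → ℝ} (hw : memW0 A w)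
    {C : Matrix (Idx n) (Idx n) ℝ} (hC : ∀ i j, C (.inr (.inr i)) (.inr (.inr j)) = 0) :
    w ⬝ᵥ C *ᵥ w = 0 := by
  obtain ⟨h₀, hz, -⟩ := hw
  simp [dotProduct, mulVec, Fintype.sum_sum_type, h₀, hz, hC]

theorem memW0.trace_mul_vecMulVec_eq_zero {w : Idx n → ℝ} (hw : memW0 A w)
    {C : Matrix (Idx n) (Idx n) ℝ} (hC : ∀ i j, C (.inr (.inr i)) (.inr (.inr j)) = 0) :
    (C * vecMulVec w w).trace = 0 := by
  rw [mul_vecMulVec, trace_vecMulVec, dotProduct_comm]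
  exact hw.dotProduct_mulVec_eq_zero hC

theorem BidualFeasible.add_vecMulVec {X : Matrix (Idx n) (Idx n) ℝ} (hX : BidualFeasible A y X)
    {w : Idx n → ℝ} (hw : memW0 A w) : BidualFeasible A y (X + vecMulVec w w) := by
  obtain ⟨hpsd, hA, hE₀, hEC⟩ := hX
  have htrace {C : Matrix (Idx n) (Idx n) ℝ} (hC : ∀ i j, C (.inr (.inr i)) (.inr (.inr j)) = 0) :
      (C * (X + vecMulVec w w)).trace = (C * X).trace := by
    rw [mul_add, trace_add, hw.trace_mul_vecMulVec_eq_zero hC, add_zero]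
  refine ⟨hpsd.add (posSemidef_vecMulVec_self w), fun j => ?_, ?_, fun i => ⟨?_, ?_⟩⟩
  · rw [htrace fun _ _ => rfl, hA j]
  · rw [htrace fun _ _ => rfl, hE₀]
  · rw [htrace fun _ _ => rfl, (hEC i).1]
  · rw [htrace fun _ _ => rfl, (hEC i).2]

theorem BidualOptimal.add_vecMulVec {X : Matrix (Idx n) (Idx n) ℝ} (hX : BidualOptimal A y X)
    {w : Idx n → ℝ} (hw : memW0 A w) : BidualOptimal A y (X + vecMulVec w w) := by
  refine ⟨hX.1.add_vecMulVec hw, fun Y hY => ?_⟩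
  rw [mul_add, trace_add, hw.trace_mul_vecMulVec_eq_zero fun _ _ => rfl, add_zero]
  exact hX.2 Y hY

theorem BidualOptimal.add_sum_vecMulVec {X : Matrix (Idx n) (Idx n) ℝ} (hX : BidualOptimal A y X)
    {ι : Type*} {v : ι → Idx n → ℝ} (hv : ∀ i, memW0 A (v i)) (s : Finset ι) :
    BidualOptimal A y (X + ∑ i ∈ s, vecMulVec (v i) (v i)) := by
  classical
  induction s using Finset.induction_on with
  | empty => simpa using hX
  | insert i s hi ih =>
    rw [Finset.sum_insert hi, add_comm (vecMulVec _ _), ← add_assoc]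
    exact ih.add_vecMulVec (hv i)

theorem exists_linearIndependent_memW0 (hrank : A.rank = m) :
    ∃ v : Fin (n - m) → Idx n → ℝ, LinearIndependent ℝ v ∧ ∀ i, memW0 A (v i) := by
  have hker : finrank ℝ (LinearMap.ker A.mulVecLin) = n - m := by
    have := LinearMap.finrank_range_add_finrank_ker A.mulVecLin
    rw [Matrix.rank] at hrank
    simp only [finrank_fin_fun] at this
    omega
  have b : Basis (Fin (n - m)) ℝ (LinearMap.ker A.mulVecLin) := finBasisOfFinrankEq ℝ _ hker
  let v : Fin (n - m) → Idx n → ℝ := fun i => Sum.elim 0 (Sum.elim 0 (b i))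
  refine ⟨v, ?_, fun i => ⟨rfl, fun _ => rfl, ?_⟩⟩
  · have hcomp : LinearMap.funLeft ℝ ℝ (Sum.inr ∘ Sum.inr) ∘ v =
        (LinearMap.ker A.mulVecLin).subtype ∘ b := by
      ext i j
      rfl
    refine LinearIndependent.of_comp (LinearMap.funLeft ℝ ℝ (Sum.inr ∘ Sum.inr)) ?_
    rw [hcomp]
    exact b.linearIndependent.map' _ (Submodule.ker_subtype _)
  · exact LinearMap.mem_ker.mp (b i).2

end BidualSDP

theorem stmt_18_general (m n : ℕ) (A : Matrix (Fin m) (Fin n) ℝ) (y : Fin m → ℝ)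
    (hrank : A.rank = m)
    (hne : ∃ X, BidualOptimal A y X) :
    ∃ X, BidualOptimal A y X ∧ n - m ≤ X.rank := by
  obtain ⟨X, hX⟩ := hne
  obtain ⟨v, hli, hv⟩ := exists_linearIndependent_memW0 hrank
  refine ⟨X + ∑ i, vecMulVec (v i) (v i), hX.add_sum_vecMulVec hv _, ?_⟩
  calc n - m = (∑ i, vecMulVec (v i) (v i)).rank := by
        rw [rank_sum_vecMulVec_self hli, Fintype.card_fin]
    _ ≤ _ := hX.1.1.rank_le_rank_add <| posSemidef_sum _ fun i _ => posSemidef_vecMulVec_self (v i)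

theorem stmt_18 (m n : ℕ) (A : Matrix (Fin m) (Fin n) ℝ) (y : Fin m → ℝ)
    (hrank : A.rank = m) (hmn : m < n)
    (hne : ∃ X, BidualOptimal A y X) :
    ∃ X, BidualOptimal A y X ∧ n - m ≤ X.rank :=
  stmt_18_general m n A y hrank hne
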